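/- Let Φ be a root system, λ a dominant coweight, α a positive root, and k_α an integer such that (λ - k_α α^∨)_dom ≼ μ for a dominant coweight μ. Then for every integer k with ⟨λ,α⟩ ≤ k ≤ k_α, the coweight λ - k α^∨ lies in the convex hull of the Weyl group orbit of (λ - k_α α^∨)_dom, and consequently (λ - k α^∨)_dom ≼ μ. -/
import Mathlib


/-- For `⟨lam,α⟩ ≤ k ≤ k_α`, the coweight `lam - k α^∨` lies in the convex
hull of the Weyl orbit of `(lam - k_α α^∨)_dom`, and consequently
`(lam - k α^∨)_dom ≼ mu`. -/
theorem stmt_2 {V : Type*} [AddCommGroup V] [Module ℝ V]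
    (α : Module.Dual ℝ V) (c : V) (hc : α c = 2)
    (W : Subgroup (V ≃ₗ[ℝ] V))
    (hsW : ∃ s ∈ W, ∀ v : V, (s : V ≃ₗ[ℝ] V) v = v - α v • c)
    (dom : V → V) (le : V → V → Prop)
    (lam mu : V) (hlam : 0 ≤ α lam)
    (ka : ℤ)
    -- `dom ν` is a Weyl-conjugate of `ν`:
    (horb : ∃ w ∈ W, (w : V ≃ₗ[ℝ] V) (dom (lam - (ka : ℝ) • c)) = lam - (ka : ℝ) • c)
    -- `(lam - k_α α^∨)_dom ≼ mu`:
    (hka : le (dom (lam - (ka : ℝ) • c)) mu)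
    -- standard fact: a coweight in the coroot-lattice translate lying in the convex hull
    -- of the Weyl orbit of `(lam - k_α α^∨)_dom` has dominant representative `≼ mu`:
    (hstd : ∀ ν : V, (∃ m : ℤ, ν = lam - (m : ℝ) • c) →
      ν ∈ convexHull ℝ {x : V | ∃ w ∈ W, x = (w : V ≃ₗ[ℝ] V) (dom (lam - (ka : ℝ) • c))} →
      le (dom ν) mu)
    (k : ℤ) (hk1 : α lam ≤ (k : ℝ)) (hk2 : k ≤ ka) :
    (lam - (k : ℝ) • c) ∈
        convexHull ℝ {x : V | ∃ w ∈ W, x = (w : V ≃ₗ[ℝ] V) (dom (lam - (ka : ℝ) • c))}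
      ∧ le (dom (lam - (k : ℝ) • c)) mu := by
  obtain ⟨w, hw, hwp⟩ := horb
  obtain ⟨s, hs, hsv⟩ := hsW
  set S : Set V := {x : V | ∃ w ∈ W, x = (w : V ≃ₗ[ℝ] V) (dom (lam - (ka : ℝ) • c))} with hS
  set b : ℝ := (ka : ℝ) with hb
  set a : ℝ := α lam - b with haa
  have hkb : (k : ℝ) ≤ b := by
    show (k : ℝ) ≤ (ka : ℝ); exact_mod_cast hk2
  have hak : a ≤ (k : ℝ) := by
    have : (0 : ℝ) ≤ b := le_trans hlam (le_trans hk1 hkb)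
    simp only [haa]; linarith
  have hp1 : (lam - b • c) ∈ S := ⟨w, hw, hwp.symm⟩
  have hp2 : (lam - a • c) ∈ S := by
    refine ⟨s * w, mul_mem hs hw, ?_⟩
    have : ((s * w : V ≃ₗ[ℝ] V)) (dom (lam - (ka : ℝ) • c))
        = (s : V ≃ₗ[ℝ] V) (lam - b • c) := by
      show (s : V ≃ₗ[ℝ] V) ((w : V ≃ₗ[ℝ] V) (dom (lam - (ka : ℝ) • c))) = _
      rw [hwp]
    rw [this, hsv]
    have hα : α (lam - b • c) = α lam - 2 * b := by
      simp [map_sub, map_smul, hc]; ring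
    rw [hα]
    have : a = α lam - 2 * b + b := by simp [haa]; ring
    rw [this]
    module
  have hmem : (lam - (k : ℝ) • c) ∈ convexHull ℝ S := by
    rcases eq_or_lt_of_le (le_trans hak hkb) with h | h
    · have : (k : ℝ) = b := le_antisymm hkb (h ▸ hak)
      rw [this]
      exact subset_convexHull ℝ S hp1
    · set t : ℝ := (b - k) / (b - a) with ht
      have hba : (0 : ℝ) < b - a := by linarith
      have ht0 : 0 ≤ t := div_nonneg (by linarith) hba.le
      have ht1 : t ≤ 1 := (div_le_one hba).2 (by linarith)
      have key : (1 - t) • (lam - b • c) + t • (lam - a • c) = lam - (k : ℝ) • c := by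
        have htk : t * (b - a) = b - k := div_mul_cancel₀ _ hba.ne'
        have hcoef : (1 - t) * b + t * a = (k : ℝ) := by nlinarith [htk]
        have expand : (1 - t) • (lam - b • c) + t • (lam - a • c)
            = lam - ((1 - t) * b + t * a) • c := by module
        rw [expand, hcoef]
      have : (lam - (k : ℝ) • c) ∈ segment ℝ (lam - b • c) (lam - a • c) :=
        ⟨1 - t, t, by linarith, ht0, by ring, key⟩
      exact (convex_convexHull ℝ S).segment_subset
        (subset_convexHull ℝ S hp1) (subset_convexHull ℝ S hp2) this
  exact ⟨hmem, hstd _ ⟨k, rfl⟩ hmem⟩
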